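/- arXiv:1409.6087 — 3 statements merged into one kernel-verified Lean document; each statement's English description precedes it below -/
import Mathlib

section
/- The simplices of K_{n-1}^{k-1} containing a fixed vertex, viewed as columns of ∂(K_n^k), form a maximal linearly independent set (a basis of the column space) of the boundary matrix of K_n^k. -/
/-!
Write `∂ s` for the column of the facet `s`. For a facet `s` through `v`, the ridge `s.erase v`
lies in no other facet through `v`, so the columns of facets through `v` are linearly
independent. For a facet `s` avoiding `v`, the relation `∂ ∂ (insert v s) = 0` expresses `∂ s`
as a combination of the columns of the facets `(insert v s).erase u`, `u ∈ s`, all of which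
contain `v`.
-/

open Matrix

def csign {n : ℕ} (s r : Finset (Fin n)) : ℤ :=
  if r ⊆ s then (s \ r).sum (fun v => (-1 : ℤ) ^ ((s.filter (fun w => w < v)).card)) else 0

def cbnd (n k : ℕ) :
    Matrix {r : Finset (Fin n) // r.card = k - 1} {s : Finset (Fin n) // s.card = k} ℤ :=
  fun r s => csign s.1 r.1

/-- The column of `∂(K_n^k)` indexed by the facet `s`, as a vector over `ℚ`. -/
def ccol (n k : ℕ) (s : {s : Finset (Fin n) // s.card = k}) :
    {r : Finset (Fin n) // r.card = k - 1} → ℚ :=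
  fun r => ((cbnd n k) r s : ℚ)

open Finset

theorem linearIndependent_of_apply_ne_zero_of_apply_eq_zero {ι κ K : Type*} [Ring K]
    [NoZeroDivisors K] (f : ι → κ → K) (c : ι → κ) (hself : ∀ i, f i (c i) ≠ 0)
    (hother : ∀ i j, j ≠ i → f j (c i) = 0) : LinearIndependent K f := by
  refine linearIndependent_iff'.mpr fun s g hg i hi => ?_
  have hgi := congrFun hg (c i)
  simp only [Finset.sum_apply, Pi.smul_apply, smul_eq_mul, Pi.zero_apply] at hgi
  rw [sum_eq_single_of_mem i hi fun j _ hji => by rw [hother i j hji, mul_zero]] at hgi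
  exact (mul_eq_zero.mp hgi).resolve_right (hself i)

section Csign

variable {n : ℕ}

theorem csign_eq_zero_of_not_subset {s r : Finset (Fin n)} (h : ¬r ⊆ s) : csign s r = 0 :=
  if_neg h

theorem csign_erase {s : Finset (Fin n)} {a : Fin n} (ha : a ∈ s) :
    csign s (s.erase a) = (-1) ^ #{w ∈ s | w < a} := by
  rw [csign, if_pos (erase_subset a s), sdiff_erase_self ha, sum_singleton]

theorem csign_erase_ne_zero {s : Finset (Fin n)} {a : Fin n} (ha : a ∈ s) :
    csign s (s.erase a) ≠ 0 := by
  rw [csign_erase ha]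
  exact pow_ne_zero _ (by norm_num)

/-- The two ways of removing `a < b` from `t` carry opposite signs: removing `a` first shifts
the position of `b` by one. -/
theorem csign_mul_csign_erase_erase_add_eq_zero {t : Finset (Fin n)} {a b : Fin n}
    (ha : a ∈ t) (hb : b ∈ t) (hab : a < b) :
    csign t (t.erase a) * csign (t.erase a) ((t.erase a).erase b) +
      csign t (t.erase b) * csign (t.erase b) ((t.erase b).erase a) = 0 := by
  have hposb : #{w ∈ t | w < b} = #{w ∈ t.erase a | w < b} + 1 := by
    rw [filter_erase, card_erase_add_one (mem_filter.mpr ⟨ha, hab⟩)]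
  have hposa : #{w ∈ t.erase b | w < a} = #{w ∈ t | w < a} := by
    rw [filter_erase, erase_eq_of_notMem (by simp [hab.not_gt])]
  rw [csign_erase ha, csign_erase hb, csign_erase (mem_erase.mpr ⟨hab.ne', hb⟩),
    csign_erase (mem_erase.mpr ⟨hab.ne, ha⟩), hposb, hposa, pow_succ]
  ring

theorem sum_csign_erase_mul_csign_eq_zero {t r : Finset (Fin n)} (hcard : #r + 2 = #t) :
    ∑ u ∈ t, csign t (t.erase u) * csign (t.erase u) r = 0 := by
  by_cases hrt : r ⊆ t
  swap
  · exact sum_eq_zero fun u _ =>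
      by rw [csign_eq_zero_of_not_subset fun h => hrt (h.trans (erase_subset u t)), mul_zero]
  obtain ⟨a, b, hne, hpair⟩ : ∃ a b, a ≠ b ∧ t \ r = {a, b} :=
    card_eq_two.mp (by rw [card_sdiff_of_subset hrt]; omega)
  wlog hab : a < b generalizing a b
  · exact this b a hne.symm (by rw [hpair, pair_comm]) (hne.lt_or_gt.resolve_left hab)
  have hr : r = (t.erase b).erase a := by
    rw [← Finset.sdiff_sdiff_eq_self hrt, hpair, sdiff_insert, sdiff_singleton_eq_erase]
  have ha : a ∈ t := (mem_sdiff.mp (hpair ▸ mem_insert_self a {b})).1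
  have hb : b ∈ t := (mem_sdiff.mp (hpair ▸ mem_insert_of_mem (mem_singleton_self b))).1
  have hvanish : ∀ u ∈ t, u ∉ ({a, b} : Finset (Fin n)) →
      csign t (t.erase u) * csign (t.erase u) r = 0 := by
    intro u hu hu'
    have hur : u ∈ r := by
      by_contra hur; exact hu' (hpair ▸ mem_sdiff.mpr ⟨hu, hur⟩)
    rw [csign_eq_zero_of_not_subset fun h => notMem_erase u t (h hur), mul_zero]
  rw [← sum_subset (hpair ▸ sdiff_subset) hvanish, sum_pair hab.ne]
  nth_rw 1 [hr, erase_right_comm]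
  rw [hr]
  exact csign_mul_csign_erase_erase_add_eq_zero ha hb hab

end Csign

/-- `ccol` extended to sets of any size, so that columns of `(insert v s).erase u` need no
cardinality proof. -/
def boundaryCol (n k : ℕ) (s : Finset (Fin n)) : {r : Finset (Fin n) // r.card = k - 1} → ℚ :=
  fun r => csign s r.1

section Columns

variable {n k : ℕ}

theorem sum_csign_erase_smul_boundaryCol_erase_eq_zero (hk : 1 ≤ k) {t : Finset (Fin n)}
    (ht : #t = k + 1) :
    ∑ u ∈ t, (csign t (t.erase u) : ℚ) • boundaryCol n k (t.erase u) = 0 := by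
  funext r
  simp only [Finset.sum_apply, Pi.smul_apply, smul_eq_mul, Pi.zero_apply, boundaryCol]
  exact_mod_cast sum_csign_erase_mul_csign_eq_zero (by rw [r.2, ht]; omega)

theorem linearIndependent_ccol_of_mem (v : Fin n) :
    LinearIndependent ℚ
      (fun s : {s : {s : Finset (Fin n) // s.card = k} // v ∈ s.1.1} => ccol n k s.1) := by
  refine linearIndependent_of_apply_ne_zero_of_apply_eq_zero _
    (fun s => ⟨s.1.1.erase v, by rw [card_erase_of_mem s.2, s.1.2]⟩)
    (fun s => Int.cast_ne_zero.mpr (csign_erase_ne_zero s.2)) fun s s' hne => ?_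
  refine Int.cast_eq_zero.mpr (csign_eq_zero_of_not_subset fun h => hne ?_)
  rw [erase_subset_iff_of_mem s'.2] at h
  exact Subtype.ext (Subtype.ext (eq_of_subset_of_card_le h (by rw [s.1.2, s'.1.2])).symm)

theorem span_ccol_of_mem (hk : 1 ≤ k) (v : Fin n) :
    Submodule.span ℚ
        (Set.range (fun s : {s : {s : Finset (Fin n) // s.card = k} // v ∈ s.1.1} =>
          ccol n k s.1)) =
      Submodule.span ℚ (Set.range (ccol n k)) := by
  set W := Submodule.span ℚ
    (Set.range (fun s : {s : {s : Finset (Fin n) // s.card = k} // v ∈ s.1.1} => ccol n k s.1))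
  have hmem : ∀ s : Finset (Fin n), #s = k → v ∈ s → boundaryCol n k s ∈ W :=
    fun s hs hv => Submodule.subset_span ⟨⟨⟨s, hs⟩, hv⟩, rfl⟩
  refine le_antisymm (Submodule.span_mono ?_) (Submodule.span_le.mpr ?_)
  · rintro _ ⟨s, rfl⟩
    exact ⟨s.1, rfl⟩
  rintro _ ⟨⟨s, hs⟩, rfl⟩
  change boundaryCol n k s ∈ W
  by_cases hv : v ∈ s
  · exact hmem s hs hv
  have hsign : (csign (insert v s) s : ℚ) ≠ 0 := by
    simpa only [erase_insert hv] using
      Int.cast_ne_zero.mpr (csign_erase_ne_zero (mem_insert_self v s))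
  have hrel := sum_csign_erase_smul_boundaryCol_erase_eq_zero hk
    (by rw [card_insert_of_notMem hv, hs] : #(insert v s) = k + 1)
  rw [sum_insert hv, erase_insert hv, add_eq_zero_iff_eq_neg] at hrel
  rw [← Submodule.smul_mem_iff W hsign, hrel]
  refine W.neg_mem (W.sum_mem fun u hu => W.smul_mem _ (hmem _ ?_ ?_))
  · rw [card_erase_of_mem (mem_insert_of_mem hu), card_insert_of_notMem hv, hs, Nat.add_sub_cancel]
  · exact mem_erase.mpr ⟨fun h => hv (h ▸ hu), mem_insert_self v s⟩

end Columns

theorem stmt7_general (n k : ℕ) (h2 : 2 ≤ k) (v : Fin n) :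
    LinearIndependent ℚ
      (fun s : {s : {s : Finset (Fin n) // s.card = k} // v ∈ s.1.1} => ccol n k s.1) ∧
    Submodule.span ℚ
        (Set.range (fun s : {s : {s : Finset (Fin n) // s.card = k} // v ∈ s.1.1} =>
          ccol n k s.1)) =
      Submodule.span ℚ (Set.range (ccol n k)) :=
  ⟨linearIndependent_ccol_of_mem v, span_ccol_of_mem (by omega) v⟩

/-- Lemma 4.5: the columns of `∂(K_n^k)` indexed by facets containing
a fixed vertex `v` are linearly independent over `ℚ` and span the full column space,
i.e. they form a basis of the column space of the boundary matrix of `K_n^k`. -/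
theorem stmt7 (n k : ℕ) (h2 : 2 ≤ k) (hk : k ≤ n - 1) (v : Fin n) :
    LinearIndependent ℚ
      (fun s : {s : {s : Finset (Fin n) // s.card = k} // v ∈ s.1.1} => ccol n k s.1) ∧
    Submodule.span ℚ
        (Set.range (fun s : {s : {s : Finset (Fin n) // s.card = k} // v ∈ s.1.1} =>
          ccol n k s.1)) =
      Submodule.span ℚ (Set.range (ccol n k)) :=
  stmt7_general n k h2 v
end

section
/- For every dimension d, there exists a bridgeless d-dimensional simplicial complex with no nowhere-zero modular q-flow for any q ≤ d+2; namely, the complete complex K_{d+3}^{d+1} works, so κ(d) > d+2. -/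
open Matrix

/-- Number of nowhere-zero modular `q`-flows of an integer matrix. -/
noncomputable def mFlowCount {R F : Type} [Fintype R] [Fintype F]
    (B : Matrix R F ℤ) (q : ℕ) : ℕ :=
  Nat.card {φ : F → ZMod q //
    (B.map (Int.cast : ℤ → ZMod q)).mulVec φ = 0 ∧ ∀ f, φ f ≠ 0}

/-- `f` is a coloop (bridge) of the column matroid of `M` over `ℚ`: the column of `f`
is not in the span of the other columns. -/
def MatColoop {R F : Type} [Fintype R] [Fintype F] (M : Matrix R F ℤ) (f : F) : Prop :=
  (fun r => (M r f : ℚ)) ∉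
    Submodule.span ℚ ((fun g => fun r => (M r g : ℚ)) '' {g | g ≠ f})

/-!
The facets of `K_{d+3}^{d+1}` are the complements `{a, b}ᶜ` of pairs of vertices and its ridges
the complements `{u, v, w}ᶜ` of triples. Reading a chain `φ` as the edge function
`χ a b = (-1) ^ (a + b) * φ {a, b}ᶜ` (`edgeValue`), the boundary of `φ` at the ridge
`{u, v, w}ᶜ` is `± (χ v w - χ u w + χ u v)`. So flows are exactly the cocycles on the vertex
set, i.e. `χ a b = g b - g a` for a function `g` on the `d + 3` vertices, and a flow is nowhere
zero iff `g` is injective. Over `ZMod q` this forces `q ≥ d + 3`, while over `ℚ` the function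
`g a = a` gives a nowhere-zero flow, which puts every column of the boundary matrix in the span
of the others.
-/

open Finset

theorem Finset.exists_eq_triple_of_card_eq_three {α : Type*} [LinearOrder α] {s : Finset α}
    (h : #s = 3) : ∃ u v w, u < v ∧ v < w ∧ s = {u, v, w} := by
  set f := s.orderEmbOfFin h
  refine ⟨f 0, f 1, f 2, f.strictMono (by decide), f.strictMono (by decide), ?_⟩
  rw [← coe_inj, ← range_orderEmbOfFin s h]
  ext
  simp only [Set.mem_range, Fin.exists_fin_succ, Fin.exists_fin_zero, coe_insert, coe_singleton,
    Set.mem_insert_iff, Set.mem_singleton_iff]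
  grind

theorem Finset.exists_eq_pair_of_card_eq_two {α : Type*} [LinearOrder α] {s : Finset α}
    (h : #s = 2) : ∃ a b, a < b ∧ s = {a, b} := by
  set f := s.orderEmbOfFin h
  refine ⟨f 0, f 1, f.strictMono (by decide), ?_⟩
  rw [← coe_inj, ← range_orderEmbOfFin s h]
  ext
  simp only [Set.mem_range, Fin.exists_fin_succ, Fin.exists_fin_zero, coe_insert, coe_singleton,
    Set.mem_insert_iff, Set.mem_singleton_iff]
  grind

theorem not_matColoop_of_mulVec_eq_zero {R F : Type} [Fintype R] [Fintype F]
    {A : Matrix R F ℤ} {x : F → ℚ} (hx : A.map (Int.cast : ℤ → ℚ) *ᵥ x = 0) {f : F}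
    (hf : x f ≠ 0) : ¬ MatColoop A f := by
  classical
  set col : F → R → ℚ := fun g r => (A r g : ℚ)
  have hsum : x f • col f + ∑ g ∈ univ.erase f, x g • col g = 0 := by
    rw [add_sum_erase _ (fun g => x g • col g) (mem_univ f)]
    ext r
    simpa [col, mulVec, dotProduct, mul_comm] using congrFun hx r
  have hrest :
      ∑ g ∈ univ.erase f, x g • col g ∈ Submodule.span ℚ (col '' {g | g ≠ f}) :=
    Submodule.sum_mem _ fun g hg =>
      Submodule.smul_mem _ _ (Submodule.subset_span ⟨g, ne_of_mem_erase hg, rfl⟩)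
  refine not_not.2 (show col f ∈ Submodule.span ℚ (col '' {g | g ≠ f}) from ?_)
  rw [← inv_smul_smul₀ hf (col f), eq_neg_of_add_eq_zero_left hsum]
  exact Submodule.smul_mem _ _ (Submodule.neg_mem _ hrest)

section Boundary

variable {M : Type*} [CommRing M] {n k : ℕ}

theorem card_filter_compl_lt_add_card_filter_lt (T : Finset (Fin n)) (x : Fin n) :
    #{y ∈ Tᶜ | y < x} + #{y ∈ T | y < x} = x := by
  rw [add_comm, ← Fin.card_Iio, ← card_filter_add_card_filter_not (s := Iio x) (· ∈ T)]
  congr 1 <;> congr 1 <;> ext y <;> simp [and_comm]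

theorem csign_insert_self {r : Finset (Fin n)} {x : Fin n} (hx : x ∉ r) :
    csign (insert x r) r = (-1) ^ #{y ∈ r | y < x} := by
  rw [csign, if_pos (subset_insert x r), insert_sdiff_of_notMem _ hx, Finset.sdiff_self,
    insert_empty, sum_singleton, filter_insert, if_neg (lt_irrefl x)]

theorem sum_csign_mul_eq_sum_compl (φ : {s : Finset (Fin n) // #s = k} → M)
    {r : Finset (Fin n)} (hr : #r + 1 = k) :
    ∑ s, (csign s.1 r : M) * φ s =
      ∑ x ∈ rᶜ, (-1) ^ #{y ∈ r | y < x} * Function.extend Subtype.val φ 0 (insert x r) := by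
  symm
  refine sum_bij_ne_zero
    (fun x hx _ => ⟨insert x r, by rwa [card_insert_of_notMem (mem_compl.1 hx)]⟩)
    (fun _ _ _ => mem_univ _) (fun x hx _ y _ _ h => ?_) (fun s _ hs => ?_) (fun x hx _ => ?_)
  · simpa [mem_compl.1 hx] using congrArg (x ∈ ·.1) h
  · have hrs : r ⊆ s.1 := by
      by_contra h
      simp [csign, h] at hs
    obtain ⟨x, hx, hxs⟩ := exists_eq_insert_iff.2 ⟨hrs, hr.trans s.2.symm⟩
    exact ⟨x, mem_compl.2 hx, by simpa [hxs] using right_ne_zero_of_mul hs, Subtype.ext hxs⟩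
  · have hx' := mem_compl.1 hx
    rw [csign_insert_self hx']
    push_cast
    congr 1
    exact Subtype.val_injective.extend_apply φ 0 ⟨insert x r, _⟩

theorem map_cbnd_mulVec_apply (φ : {s : Finset (Fin n) // #s = k} → M)
    (r : {r : Finset (Fin n) // #r = k - 1}) :
    ((cbnd n k).map (Int.cast : ℤ → M) *ᵥ φ) r = ∑ s, (csign s.1 r.1 : M) * φ s := by
  simp [mulVec, dotProduct, cbnd]

end Boundary

section CompleteComplex

variable {M : Type*} [CommRing M] {d : ℕ}

noncomputable def edgeValue (φ : {s : Finset (Fin (d + 3)) // #s = d + 1} → M)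
    (a b : Fin (d + 3)) : M :=
  (-1) ^ ((a : ℕ) + b) * Function.extend Subtype.val φ 0 {a, b}ᶜ

theorem card_compl_pair {a b : Fin (d + 3)} (hab : a ≠ b) : #({a, b}ᶜ : Finset _) = d + 1 := by
  rw [card_compl, card_pair hab, Fintype.card_fin]
  rfl

theorem edgeValue_self (φ : {s : Finset (Fin (d + 3)) // #s = d + 1} → M) (a : Fin (d + 3)) :
    edgeValue φ a a = 0 := by
  rw [edgeValue, Function.extend_apply', Pi.zero_apply, mul_zero]
  rintro ⟨s, hs⟩
  have := s.2
  rw [hs, insert_eq_of_mem (mem_singleton_self a), card_compl, card_singleton,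
    Fintype.card_fin] at this
  omega

theorem edgeValue_of_compl_eq (φ : {s : Finset (Fin (d + 3)) // #s = d + 1} → M)
    {s : {s : Finset (Fin (d + 3)) // #s = d + 1}} {a b : Fin (d + 3)} (hs : s.1ᶜ = {a, b}) :
    edgeValue φ a b = (-1) ^ ((a : ℕ) + b) * φ s := by
  rw [edgeValue, ← hs, compl_compl]
  exact congrArg _ (Subtype.val_injective.extend_apply φ 0 s)

theorem sum_csign_mul_of_compl_eq_triple (φ : {s : Finset (Fin (d + 3)) // #s = d + 1} → M)
    {r : Finset (Fin (d + 3))} {u v w : Fin (d + 3)} (huv : u < v) (hvw : v < w)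
    (hr : rᶜ = {u, v, w}) :
    ∑ s, (csign s.1 r : M) * φ s =
      (-1) ^ ((u : ℕ) + v + w) * (edgeValue φ v w - edgeValue φ u w + edgeValue φ u v) := by
  have huw := huv.trans hvw
  have hcard : #r + 1 = d + 1 := by
    have := card_compl r
    rw [hr, card_eq_three.2 ⟨u, v, w, huv.ne, huw.ne, hvw.ne, rfl⟩, Fintype.card_fin] at this
    omega
  obtain rfl : r = {u, v, w}ᶜ := by rw [← hr, compl_compl]
  -- the facet `insert x {u, v, w}ᶜ` has sign `(-1) ^ (x - #{y ∈ {u, v, w} | y < x})`: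
  -- `(-1) ^ u`, `-(-1) ^ v` and `(-1) ^ w`
  have hpos (x : Fin (d + 3)) := card_filter_compl_lt_add_card_filter_lt {u, v, w} x
  have hu : #{y ∉ ({u, v, w} : Finset _) | y < u} + 0 = u := by
    simpa [filter_insert, filter_singleton, huv.le.not_gt, huw.le.not_gt] using hpos u
  have hv : #{y ∉ ({u, v, w} : Finset _) | y < v} + 1 = v := by
    simpa [filter_insert, filter_singleton, huv, hvw.le.not_gt] using hpos v
  have hw : #{y ∉ ({u, v, w} : Finset _) | y < w} + 2 = w := by
    simpa [filter_insert, filter_singleton, huw, hvw, huv.ne] using hpos w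
  rw [sum_csign_mul_eq_sum_compl φ hcard, hr, sum_insert (by simp [huv.ne, huw.ne]),
    sum_insert (by simp [hvw.ne]), sum_singleton, ← compl_erase, ← compl_erase, ← compl_erase]
  generalize #{y ∉ ({u, v, w} : Finset _) | y < u} = pu at hu ⊢
  generalize #{y ∉ ({u, v, w} : Finset _) | y < v} = pv at hv ⊢
  generalize #{y ∉ ({u, v, w} : Finset _) | y < w} = pw at hw ⊢
  simp only [erase_insert_eq_erase, erase_insert_of_ne, huv.ne, huw.ne, hvw.ne, huv.ne',
    erase_singleton, insert_empty, ne_eq, not_false_eq_true, erase_eq_of_notMem, mem_singleton]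
  simp only [edgeValue, ← hu, ← hv, ← hw]
  ring_nf
  simp only [pow_mul', neg_one_sq, one_pow, mul_one]

theorem map_cbnd_mulVec_eq_zero_iff (φ : {s : Finset (Fin (d + 3)) // #s = d + 1} → M) :
    (cbnd (d + 3) (d + 1)).map (Int.cast : ℤ → M) *ᵥ φ = 0 ↔
      ∀ u v w : Fin (d + 3), u < v → v < w →
        edgeValue φ v w - edgeValue φ u w + edgeValue φ u v = 0 := by
  constructor
  · intro hφ u v w huv hvw
    have hcard : #({u, v, w}ᶜ : Finset (Fin (d + 3))) = d + 1 - 1 := by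
      rw [card_compl, card_eq_three.2 ⟨u, v, w, huv.ne, (huv.trans hvw).ne, hvw.ne, rfl⟩,
        Fintype.card_fin]
      rfl
    have hrow := congrFun hφ ⟨_, hcard⟩
    rw [map_cbnd_mulVec_apply, sum_csign_mul_of_compl_eq_triple φ huv hvw (compl_compl _)] at hrow
    simpa using hrow
  · intro hcocycle
    ext r
    have hcard : #r.1ᶜ = 3 := by
      rw [card_compl, r.2, Fintype.card_fin]
      omega
    obtain ⟨u, v, w, huv, hvw, hr⟩ := exists_eq_triple_of_card_eq_three hcard
    rw [map_cbnd_mulVec_apply, sum_csign_mul_of_compl_eq_triple φ huv hvw hr,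
      hcocycle u v w huv hvw, mul_zero, Pi.zero_apply]

end CompleteComplex

section ModularFlows

variable {M : Type*} [CommRing M] {d : ℕ}

theorem edgeValue_eq_sub_of_map_cbnd_mulVec_eq_zero
    {φ : {s : Finset (Fin (d + 3)) // #s = d + 1} → M}
    (hφ : (cbnd (d + 3) (d + 1)).map (Int.cast : ℤ → M) *ᵥ φ = 0) {a b : Fin (d + 3)}
    (hab : a < b) : edgeValue φ a b = edgeValue φ 0 b - edgeValue φ 0 a := by
  rcases (Fin.zero_le a).eq_or_lt with rfl | ha
  · rw [edgeValue_self, sub_zero]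
  · linear_combination (map_cbnd_mulVec_eq_zero_iff φ).1 hφ 0 a b ha hab

theorem edgeValue_ne_zero {φ : {s : Finset (Fin (d + 3)) // #s = d + 1} → M}
    (hφ : ∀ s, φ s ≠ 0) {a b : Fin (d + 3)} (hab : a ≠ b) : edgeValue φ a b ≠ 0 := by
  rw [edgeValue_of_compl_eq φ (s := ⟨_, card_compl_pair hab⟩) (compl_compl _), ne_eq,
    neg_one_pow_mul_eq_zero_iff]
  exact hφ _

theorem injective_edgeValue_zero_of_nowhereZero_flow
    {φ : {s : Finset (Fin (d + 3)) // #s = d + 1} → M}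
    (hφ : (cbnd (d + 3) (d + 1)).map (Int.cast : ℤ → M) *ᵥ φ = 0)
    (hφ₀ : ∀ s, φ s ≠ 0) :
    Function.Injective (edgeValue φ 0) := by
  refine .of_lt_imp_ne fun a b hab => ?_
  rw [ne_comm, ← sub_ne_zero, ← edgeValue_eq_sub_of_map_cbnd_mulVec_eq_zero hφ hab]
  exact edgeValue_ne_zero hφ₀ hab.ne

theorem mFlowCount_cbnd_eq_zero {q : ℕ} [NeZero q] (hq : q < d + 3) :
    mFlowCount (cbnd (d + 3) (d + 1)) q = 0 := by
  refine Nat.card_eq_zero.2 (.inl ⟨fun ⟨φ, hφ, hφ₀⟩ => ?_⟩)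
  have := Fintype.card_le_of_injective _ (injective_edgeValue_zero_of_nowhereZero_flow hφ hφ₀)
  rw [Fintype.card_fin, ZMod.card] at this
  omega

end ModularFlows

section RationalFlow

variable {M : Type*} [CommRing M] {d : ℕ}

/-- On the facet `{a, b}ᶜ` with `a < b` this is `(-1) ^ (a + b) * (g a - g b)`. -/
def potentialFlow (g : Fin (d + 3) → M) (s : {s : Finset (Fin (d + 3)) // #s = d + 1}) : M :=
  (-1) ^ (∑ t ∈ s.1ᶜ, (t : ℕ)) * ∑ t ∈ s.1ᶜ, (-1) ^ #{y ∈ s.1ᶜ | y < t} * g t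

theorem edgeValue_potentialFlow (g : Fin (d + 3) → M) {a b : Fin (d + 3)} (hab : a < b) :
    edgeValue (potentialFlow g) a b = g a - g b := by
  have hfilter :
      #{y ∈ ({a, b} : Finset _) | y < a} = 0 ∧ #{y ∈ ({a, b} : Finset _) | y < b} = 1 := by
    simp [filter_insert, filter_singleton, hab, hab.le.not_gt]
  rw [edgeValue_of_compl_eq _ (s := ⟨_, card_compl_pair hab.ne⟩) (compl_compl _), potentialFlow]
  simp only [compl_compl]
  rw [sum_pair hab.ne, sum_pair hab.ne, hfilter.1, hfilter.2, ← mul_assoc, ← pow_add,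
    Even.neg_one_pow ⟨_, rfl⟩]
  ring

theorem map_cbnd_mulVec_potentialFlow (g : Fin (d + 3) → M) :
    (cbnd (d + 3) (d + 1)).map (Int.cast : ℤ → M) *ᵥ potentialFlow g = 0 := by
  refine (map_cbnd_mulVec_eq_zero_iff _).2 fun u v w huv hvw => ?_
  rw [edgeValue_potentialFlow g huv, edgeValue_potentialFlow g hvw,
    edgeValue_potentialFlow g (huv.trans hvw)]
  ring

theorem potentialFlow_ne_zero {g : Fin (d + 3) → M} (hg : Function.Injective g)
    (s : {s : Finset (Fin (d + 3)) // #s = d + 1}) : potentialFlow g s ≠ 0 := by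
  have hcard : #s.1ᶜ = 2 := by
    rw [card_compl, s.2, Fintype.card_fin]
    omega
  obtain ⟨a, b, hab, hs⟩ := exists_eq_pair_of_card_eq_two hcard
  have := edgeValue_of_compl_eq (potentialFlow g) hs
  rw [edgeValue_potentialFlow g hab] at this
  intro h
  rw [h, mul_zero, sub_eq_zero] at this
  exact hab.ne (hg this)

end RationalFlow

/-- Theorem 1.3: for every dimension `d` there is a bridgeless
`d`-dimensional simplicial complex with no nowhere-zero modular `q`-flow for any
`q ≤ d+2`; namely the complete complex `K_{d+3}^{d+1}` works.  Hence `κ(d) > d+2`. -/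
theorem stmt13 (d : ℕ) :
    (∀ f, ¬ MatColoop (cbnd (d + 3) (d + 1)) f) ∧
    (∀ q : ℕ, 1 ≤ q → q ≤ d + 2 → mFlowCount (cbnd (d + 3) (d + 1)) q = 0) := by
  refine ⟨fun f => ?_, fun q hq₁ hq₂ => ?_⟩
  · have hg : Function.Injective fun t : Fin (d + 3) => (t : ℚ) :=
      Nat.cast_injective.comp Fin.val_injective
    exact not_matColoop_of_mulVec_eq_zero (map_cbnd_mulVec_potentialFlow _)
      (potentialFlow_ne_zero hg f)
  · have : NeZero q := ⟨by omega⟩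
    exact mFlowCount_cbnd_eq_zero (by omega)
end

section
/- If Δ is a triangulation of the real projective plane RP^2, then the number of nowhere-zero modular q-flows is 1 if q is even and 0 if q is odd; in particular Φ_Δ is not a polynomial in q. -/
/-
Since `H₂(Δ; ℤ) = 0`, the boundary map `∂₂` is injective over `ℤ`. A mod-`q` cycle `φ` then lifts
to an integer chain `ψ` with `∂ψ = q y`, and `φ ↦ [y]` identifies the mod-`q` 2-cycles with the
`q`-torsion of `H₁(Δ; ℤ) ≅ ℤ/2`: there are two of them for even `q` and only `0` for odd `q`.
Because every edge lies in exactly two triangles, the constant chain `q/2` is a nowhere-zero cycle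
mod `q` when `q` is even, so it is the unique nowhere-zero flow. A polynomial taking the value `1`
at every even `q` is the constant `1`, which contradicts the count `0` at `q = 1`.
-/

open Matrix

/-- Boundary matrix in dimension `k-1 → k-2` of the simplicial complex `K` on the
vertex set `Fin m` (rows: `(k-1)`-subsets in `K`, columns: `k`-subsets in `K`). -/
def kbnd {m : ℕ} (K : Finset (Finset (Fin m))) (k : ℕ) :
    Matrix {r : Finset (Fin m) // r ∈ K ∧ r.card = k - 1}
      {s : Finset (Fin m) // s ∈ K ∧ s.card = k} ℤ :=
  fun r s => csign s.1 r.1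

/-- Number of nowhere-zero modular `q`-flows of the `d`-dimensional complex `K`. -/
noncomputable def kFlowCount {m : ℕ} (K : Finset (Finset (Fin m))) (d q : ℕ) : ℕ :=
  Nat.card {φ : {s : Finset (Fin m) // s ∈ K ∧ s.card = d + 1} → ZMod q //
    ((kbnd K (d + 1)).map (Int.cast : ℤ → ZMod q)).mulVec φ = 0 ∧ ∀ s, φ s ≠ 0}

/-- Rank over `ℚ` of an integer matrix. -/
noncomputable def rankQ {a b : Type} [Fintype a] [Fintype b] (M : Matrix a b ℤ) : ℕ :=
  (M.map ((↑) : ℤ → ℚ)).rank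

/-- Submatrix on the columns indexed by `X`. -/
def colsub {a b : Type} (M : Matrix a b ℤ) (X : Finset b) : Matrix a X ℤ :=
  M.submatrix id (fun x => x.1)

/-- `β_d(X)`: the top Betti number of the subcomplex `X ∪ Δ_{d-1}`. -/
noncomputable def betaTop {m : ℕ} (K : Finset (Finset (Fin m))) (d : ℕ)
    (X : Finset {s : Finset (Fin m) // s ∈ K ∧ s.card = d + 1}) : ℤ :=
  (X.card : ℤ) - rankQ (colsub (kbnd K (d + 1)) X)

/-- `β_{d-1}(X)`: the codimension-one Betti number of the subcomplex `X ∪ Δ_{d-1}`,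
namely `dim ker ∂_{d-1} − rank ∂_X` over `ℚ`. -/
noncomputable def betaLow {m : ℕ} (K : Finset (Finset (Fin m))) (d : ℕ)
    (X : Finset {s : Finset (Fin m) // s ∈ K ∧ s.card = d + 1}) : ℤ :=
  ((Fintype.card {s : Finset (Fin m) // s ∈ K ∧ s.card = d} : ℤ) - rankQ (kbnd K d))
    - rankQ (colsub (kbnd K (d + 1)) X)

/-- The cycle space `Z_{d-1} = ker ∂_{d-1}` over `ℤ`. -/
noncomputable def Zlow {m : ℕ} (K : Finset (Finset (Fin m))) (d : ℕ) :
    Submodule ℤ ({s : Finset (Fin m) // s ∈ K ∧ s.card = d} → ℤ) :=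
  LinearMap.ker (kbnd K d).mulVecLin

/-- The boundary space `B_{d-1} = im ∂_d` over `ℤ`. -/
noncomputable def Blow {m : ℕ} (K : Finset (Finset (Fin m))) (d : ℕ) :
    Submodule ℤ ({s : Finset (Fin m) // s ∈ K ∧ s.card = d} → ℤ) :=
  LinearMap.range (kbnd K (d + 1)).mulVecLin

/-- Integral homology `H_{d-1}(Δ; ℤ) = Z_{d-1} / B_{d-1}`. -/
noncomputable abbrev Hlow {m : ℕ} (K : Finset (Finset (Fin m))) (d : ℕ) :=
  (Zlow K d) ⧸ (Submodule.comap (Zlow K d).subtype (Blow K d))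

section ModularKernel

variable {ι κ : Type*} [Fintype κ]

lemma intCast_comp_eq_zero_iff {q : ℕ} (v : ι → ℤ) :
    (((↑) : ℤ → ZMod q) ∘ v) = 0 ↔ ∃ y, v = (q : ℤ) • y := by
  constructor
  · intro h
    choose y hy using fun i => (ZMod.intCast_zmod_eq_zero_iff_dvd (v i) q).mp (congrFun h i)
    exact ⟨y, funext hy⟩
  · rintro ⟨y, rfl⟩
    ext i
    simp

lemma map_intCast_mulVec {q : ℕ} (A : Matrix ι κ ℤ) (v : κ → ℤ) :
    A.map ((↑) : ℤ → ZMod q) *ᵥ (((↑) : ℤ → ZMod q) ∘ v) = ((↑) : ℤ → ZMod q) ∘ (A *ᵥ v) :=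
  funext fun i => (RingHom.map_mulVec (Int.castRingHom (ZMod q)) A v i).symm

theorem card_ker_map_intCast_eq_card_torsionBy (A : Matrix ι κ ℤ)
    (hA : LinearMap.ker A.mulVecLin = ⊥) (q : ℕ) [NeZero q] :
    Nat.card (LinearMap.ker (A.map ((↑) : ℤ → ZMod q)).mulVecLin) =
      Nat.card (Submodule.torsionBy ℤ ((ι → ℤ) ⧸ LinearMap.range A.mulVecLin) (q : ℤ)) := by
  set lift : (κ → ZMod q) → κ → ℤ := fun φ t => (φ t).cast
  have hlift : ∀ φ, ((↑) : ℤ → ZMod q) ∘ lift φ = φ := fun φ =>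
    funext fun t => ZMod.intCast_zmod_cast _
  have hq : (q : ℤ) ≠ 0 := Int.natCast_ne_zero.mpr (NeZero.ne q)
  have hA' : ∀ v, A *ᵥ v = 0 → v = 0 := fun v hv => by
    simpa using (LinearMap.ker_eq_bot'.mp hA) v hv
  have hker : ∀ φ : LinearMap.ker (A.map ((↑) : ℤ → ZMod q)).mulVecLin,
      ∃ y, A *ᵥ lift φ = (q : ℤ) • y := fun φ => by
    rw [← intCast_comp_eq_zero_iff, ← map_intCast_mulVec, hlift]
    exact φ.2
  choose y hy using hker
  have hcast_sub : ∀ u v : κ → ℤ,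
      ((↑) : ℤ → ZMod q) ∘ (u - v) = ((↑) : ℤ → ZMod q) ∘ u - ((↑) : ℤ → ZMod q) ∘ v :=
    fun u v => funext fun t => Int.cast_sub (u t) (v t)
  have hmk : ∀ φ, Submodule.Quotient.mk (y φ) ∈
      Submodule.torsionBy ℤ ((ι → ℤ) ⧸ LinearMap.range A.mulVecLin) (q : ℤ) := fun φ => by
    rw [Submodule.mem_torsionBy_iff, ← Submodule.Quotient.mk_smul, ← hy,
      Submodule.Quotient.mk_eq_zero]
    exact LinearMap.mem_range_self _ _
  refine Nat.card_eq_of_bijective (fun φ => ⟨_, hmk φ⟩) ⟨fun φ₁ φ₂ h => ?_, fun ⟨x, hx⟩ => ?_⟩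
  · obtain ⟨δ, hδ⟩ := (Submodule.Quotient.eq _).mp (congrArg Subtype.val h)
    rw [Matrix.mulVecLin_apply] at hδ
    have hδ : A *ᵥ (lift φ₁ - lift φ₂ - (q : ℤ) • δ) = 0 := by
      rw [Matrix.mulVec_sub, Matrix.mulVec_sub, Matrix.mulVec_smul, hy, hy, hδ, smul_sub, sub_self]
    have hdiff : ((↑) : ℤ → ZMod q) ∘ (lift φ₁ - lift φ₂) = 0 :=
      (intCast_comp_eq_zero_iff _).mpr ⟨δ, sub_eq_zero.mp (hA' _ hδ)⟩
    rw [hcast_sub, hlift, hlift, sub_eq_zero] at hdiff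
    exact Subtype.ext hdiff
  · obtain ⟨z, rfl⟩ := Submodule.Quotient.mk_surjective _ x
    rw [Submodule.mem_torsionBy_iff, ← Submodule.Quotient.mk_smul,
      Submodule.Quotient.mk_eq_zero] at hx
    obtain ⟨δ, hδ⟩ := hx
    rw [Matrix.mulVecLin_apply] at hδ
    have hφ : ((↑) : ℤ → ZMod q) ∘ δ ∈ LinearMap.ker (A.map ((↑) : ℤ → ZMod q)).mulVecLin := by
      rw [LinearMap.mem_ker, Matrix.mulVecLin_apply, map_intCast_mulVec, intCast_comp_eq_zero_iff]
      exact ⟨z, hδ⟩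
    have hliftδ : ((↑) : ℤ → ZMod q) ∘ (lift (((↑) : ℤ → ZMod q) ∘ δ) - δ) = 0 := by
      rw [hcast_sub, hlift, sub_self]
    obtain ⟨γ, hγ⟩ := (intCast_comp_eq_zero_iff _).mp hliftδ
    refine ⟨⟨_, hφ⟩, Subtype.ext ((Submodule.Quotient.eq _).mpr
      (LinearMap.mem_range.mpr ⟨γ, smul_right_injective _ hq ?_⟩))⟩
    simp only [Matrix.mulVecLin_apply]
    rw [← Matrix.mulVec_smul, ← hγ, Matrix.mulVec_sub, hy ⟨_, hφ⟩, smul_sub, hδ]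

end ModularKernel

theorem card_torsionBy_quotient_comap_ker {R M N : Type*} [CommRing R] [IsDomain R]
    [AddCommGroup M] [Module R M] [AddCommGroup N] [Module R N] [Module.IsTorsionFree R N]
    (f : M →ₗ[R] N) {B : Submodule R M} (hB : B ≤ LinearMap.ker f) {a : R} (ha : a ≠ 0) :
    Nat.card (Submodule.torsionBy R (LinearMap.ker f ⧸ B.comap (LinearMap.ker f).subtype) a) =
      Nat.card (Submodule.torsionBy R (M ⧸ B) a) := by
  set Z := LinearMap.ker f
  let g := (B.comap Z.subtype).mapQ B Z.subtype le_rfl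
  have hg : ∀ x ∈ Submodule.torsionBy R (Z ⧸ B.comap Z.subtype) a,
      g x ∈ Submodule.torsionBy R (M ⧸ B) a := fun x hx => by
    rw [Submodule.mem_torsionBy_iff] at hx ⊢
    rw [← map_smul, hx, map_zero]
  have hginj : Function.Injective g := by
    rw [← LinearMap.ker_eq_bot, Submodule.ker_mapQ, Submodule.mkQ_map_self]
  refine Nat.card_eq_of_bijective (fun x => ⟨g x, hg x x.2⟩)
    ⟨fun x₁ x₂ h => Subtype.ext (hginj (congrArg Subtype.val h)), fun ⟨y, hy⟩ => ?_⟩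
  obtain ⟨y, rfl⟩ := Submodule.Quotient.mk_surjective _ y
  rw [Submodule.mem_torsionBy_iff, ← Submodule.Quotient.mk_smul,
    Submodule.Quotient.mk_eq_zero] at hy
  have hyZ : y ∈ Z := by
    have := hB hy
    rwa [LinearMap.mem_ker, map_smul, smul_eq_zero, or_iff_right ha] at this
  refine ⟨⟨Submodule.Quotient.mk ⟨y, hyZ⟩, ?_⟩, rfl⟩
  rw [Submodule.mem_torsionBy_iff, ← Submodule.Quotient.mk_smul, Submodule.Quotient.mk_eq_zero]
  exact hy

lemma card_torsionBy_of_linearEquiv {R M N : Type*} [CommRing R] [AddCommGroup M] [Module R M]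
    [AddCommGroup N] [Module R N] (e : M ≃ₗ[R] N) (a : R) :
    Nat.card (Submodule.torsionBy R M a) = Nat.card (Submodule.torsionBy R N a) :=
  Nat.card_congr <| e.toEquiv.subtypeEquiv fun x => by
    simp only [Submodule.mem_torsionBy_iff, LinearEquiv.coe_toEquiv, ← map_smul,
      LinearEquiv.map_eq_zero_iff]

lemma card_torsionBy_zmod_two (q : ℕ) :
    Nat.card (Submodule.torsionBy ℤ (ZMod 2) (q : ℤ)) = if 2 ∣ q then 2 else 1 := by
  have hsmul : ∀ x : ZMod 2, (q : ℤ) • x = (q : ZMod 2) * x := fun x => by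
    rw [zsmul_eq_mul, Int.cast_natCast]
  split_ifs with h
  · have hall : ∀ x : ZMod 2, x ∈ Submodule.torsionBy ℤ (ZMod 2) (q : ℤ) := fun x => by
      rw [Submodule.mem_torsionBy_iff, hsmul, (ZMod.natCast_eq_zero_iff q 2).mpr h, zero_mul]
    rw [Nat.card_congr (Equiv.subtypeUnivEquiv hall), Nat.card_zmod]
  · have hone : (q : ZMod 2) = 1 := ZMod.natCast_eq_one_iff_odd.mpr (Nat.odd_iff.mpr (by omega))
    refine Nat.card_eq_one_iff_unique.mpr ⟨⟨fun x y => Subtype.ext ?_⟩, ⟨0⟩⟩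
    have hzero : ∀ z : Submodule.torsionBy ℤ (ZMod 2) (q : ℤ), (z : ZMod 2) = 0 := fun z => by
      have hz := z.2
      rwa [Submodule.mem_torsionBy_iff, hsmul, hone, one_mul] at hz
    rw [hzero x, hzero y]

lemma Matrix.map_intCast_mulVec_const_eq_zero {ι κ R : Type*} [Fintype κ] [Ring R]
    (A : Matrix ι κ ℤ) (hA : ∀ i, Even (∑ j, A i j)) {c : R} (hc : c + c = 0) :
    A.map ((↑) : ℤ → R) *ᵥ (fun _ => c) = 0 := by
  ext i
  obtain ⟨k, hk⟩ := hA i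
  simp only [Matrix.mulVec, dotProduct, Matrix.map_apply, ← Finset.sum_mul, ← Int.cast_sum, hk,
    Int.cast_add, add_mul, Pi.zero_apply]
  rw [← mul_add, hc, mul_zero]

lemma ZMod.exists_ne_zero_add_self_eq_zero {q : ℕ} (hq : 0 < q) (h : 2 ∣ q) :
    ∃ c : ZMod q, c ≠ 0 ∧ c + c = 0 := by
  obtain ⟨n, rfl⟩ := h
  refine ⟨n, fun hn => ?_, by rw [← Nat.cast_add, ← two_mul, ZMod.natCast_self]⟩
  have := Nat.le_of_dvd (by omega) ((ZMod.natCast_eq_zero_iff n (2 * n)).mp hn)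
  omega

section NowhereZero

variable {α M R : Type*} [Nonempty α] [AddCommMonoid M] [Semiring R] [Module R M]
  (S : Submodule R (α → M))

lemma card_nowhereZero_eq_zero (hS : Nat.card S = 1) :
    Nat.card {φ // φ ∈ S ∧ ∀ a, φ a ≠ 0} = 0 := by
  have : Subsingleton S := (Nat.card_eq_one_iff_unique.mp hS).1
  refine @Nat.card_of_isEmpty _ ⟨fun ⟨φ, hφ, hnz⟩ => ?_⟩
  have : φ = 0 := congrArg Subtype.val (Subsingleton.elim (⟨φ, hφ⟩ : S) 0)
  exact hnz (Classical.arbitrary α) (congrFun this _)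

lemma card_nowhereZero_eq_one (hS : Nat.card S = 2) {v : α → M} (hv : v ∈ S)
    (hvnz : ∀ a, v a ≠ 0) : Nat.card {φ // φ ∈ S ∧ ∀ a, φ a ≠ 0} = 1 := by
  obtain ⟨w, -, hw⟩ := (Nat.card_eq_two_iff' (0 : S)).mp hS
  have hne : ∀ φ : α → M, (∀ a, φ a ≠ 0) → φ ≠ 0 := fun φ hφ h =>
    hφ (Classical.arbitrary α) (congrFun h _)
  refine Nat.card_eq_one_iff_unique.mpr ⟨⟨fun ⟨φ, hφ, hφnz⟩ ⟨ψ, hψ, hψnz⟩ => ?_⟩, ⟨⟨v, hv, hvnz⟩⟩⟩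
  have h₁ := hw ⟨φ, hφ⟩ fun h => hne φ hφnz (congrArg Subtype.val h)
  have h₂ := hw ⟨ψ, hψ⟩ fun h => hne ψ hψnz (congrArg Subtype.val h)
  have hφψ : φ = ψ := congrArg Subtype.val (h₁.trans h₂.symm)
  exact Subtype.ext hφψ

end NowhereZero

lemma not_exists_polynomial_of_eq_ite_even (f : ℕ → ℕ)
    (hf : ∀ q : ℕ, 0 < q → f q = if 2 ∣ q then 1 else 0) :
    ¬∃ p : Polynomial ℚ, ∀ q : ℕ, 0 < q → (f q : ℚ) = p.eval (q : ℚ) := by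
  rintro ⟨p, hp⟩
  have heven : ∀ k : ℕ, p.eval ((2 * (k + 1) : ℕ) : ℚ) = 1 := fun k => by
    rw [← hp _ (by positivity), hf _ (by positivity), if_pos (dvd_mul_right 2 _), Nat.cast_one]
  have hpC : p = Polynomial.C 1 := by
    rw [← sub_eq_zero]
    refine Polynomial.eq_zero_of_infinite_isRoot _ (Set.infinite_of_injective_forall_mem
      (f := fun k : ℕ => ((2 * (k + 1) : ℕ) : ℚ)) (fun a b h => by simpa using h) fun k => ?_)
    simp only [Set.mem_ofPred_eq, Polynomial.IsRoot.def, Polynomial.eval_sub, Polynomial.eval_C,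
      heven k, sub_self]
  have h1 := hp 1 one_pos
  rw [hf 1 one_pos, hpC] at h1
  norm_num at h1

section Boundary

variable {m : ℕ}

lemma csign_of_not_subset {s r : Finset (Fin m)} (h : ¬r ⊆ s) : csign s r = 0 := if_neg h

lemma card_filter_lt_insert {a : Fin m} {r : Finset (Fin m)} (ha : a ∉ r) (x : Fin m) :
    ((insert a r).filter (· < x)).card = (r.filter (· < x)).card + if a < x then 1 else 0 := by
  rw [Finset.filter_insert]
  split_ifs
  · exact Finset.card_insert_of_notMem (by simp [ha])
  · rfl

lemma csign_insert {a : Fin m} {r : Finset (Fin m)} (ha : a ∉ r) :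
    csign (insert a r) r = (-1) ^ (r.filter (· < a)).card := by
  rw [csign, if_pos (Finset.subset_insert a r), Finset.insert_sdiff_cancel ha,
    Finset.sum_singleton, card_filter_lt_insert ha, if_neg (lt_irrefl a), add_zero]

/-- Exactly one of `a < b`, `b < a` holds, and it flips the sign of exactly one of the two terms. -/
lemma csign_mul_csign_add_csign_mul_csign {a b : Fin m} {r : Finset (Fin m)} (hab : a ≠ b)
    (ha : a ∉ r) (hb : b ∉ r) :
    csign (insert a r) r * csign (insert a (insert b r)) (insert a r) +
      csign (insert b r) r * csign (insert a (insert b r)) (insert b r) = 0 := by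
  have hba : b ∉ insert a r := by simp [hab.symm, hb]
  have hab' : a ∉ insert b r := by simp [hab, ha]
  rw [Finset.insert_comm a b r, csign_insert ha, csign_insert hba, card_filter_lt_insert ha,
    ← Finset.insert_comm a b r, csign_insert hb, csign_insert hab', card_filter_lt_insert hb]
  rcases lt_or_gt_of_ne hab with h | h <;> simp [h, h.not_gt, pow_succ] <;> ring

lemma eq_insert_or_eq_insert_of_subset {r s t : Finset (Fin m)} {a b : Fin m}
    (hab : s \ r = {a, b}) (hrt : r ⊆ t) (hts : t ⊆ s) (hcard : t.card = r.card + 1) :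
    t = insert a r ∨ t = insert b r := by
  obtain ⟨x, hx⟩ := Finset.card_eq_one.mp
    (show (t \ r).card = 1 by rw [Finset.card_sdiff_of_subset hrt]; omega)
  have ht : t = insert x r := by
    rw [← Finset.sdiff_union_of_subset hrt, hx, Finset.insert_eq]
  have hxs : x ∈ s \ r := Finset.sdiff_subset_sdiff hts le_rfl (hx ▸ Finset.mem_singleton_self x)
  rw [hab, Finset.mem_insert, Finset.mem_singleton] at hxs
  rcases hxs with rfl | rfl
  exacts [Or.inl ht, Or.inr ht]

variable (K : Finset (Finset (Fin m)))

lemma sum_csign_mul_csign (hK : ∀ s ∈ K, ∀ t ⊆ s, t ∈ K) {k : ℕ} (r s : Finset (Fin m))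
    (hr : r.card = k) (hs : s ∈ K ∧ s.card = k + 2) :
    ∑ t : {t : Finset (Fin m) // t ∈ K ∧ t.card = k + 1}, csign t.1 r * csign s t.1 = 0 := by
  have hvanish : ∀ t : Finset (Fin m), ¬(r ⊆ t ∧ t ⊆ s) → csign t r * csign s t = 0 := by
    intro t ht
    by_cases hrt : r ⊆ t
    · rw [csign_of_not_subset fun hts => ht ⟨hrt, hts⟩, mul_zero]
    · rw [csign_of_not_subset hrt, zero_mul]
  by_cases hrs : r ⊆ s
  swap
  · exact Finset.sum_eq_zero fun t _ => hvanish t.1 fun h => hrs (h.1.trans h.2)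
  obtain ⟨a, b, hne, hab⟩ := Finset.card_eq_two.mp
    (show (s \ r).card = 2 by rw [Finset.card_sdiff_of_subset hrs]; omega)
  obtain ⟨has, har⟩ := Finset.mem_sdiff.mp (show a ∈ s \ r by simp [hab])
  obtain ⟨hbs, hbr⟩ := Finset.mem_sdiff.mp (show b ∈ s \ r by simp [hab])
  have hface : ∀ x ∈ s, x ∉ r → insert x r ∈ K ∧ (insert x r).card = k + 1 := fun x hx hxr =>
    ⟨hK s hs.1 _ (Finset.insert_subset hx hrs), by rw [Finset.card_insert_of_notMem hxr, hr]⟩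
  let t₁ : {t : Finset (Fin m) // t ∈ K ∧ t.card = k + 1} := ⟨insert a r, hface a has har⟩
  let t₂ : {t : Finset (Fin m) // t ∈ K ∧ t.card = k + 1} := ⟨insert b r, hface b hbs hbr⟩
  have ht₁₂ : t₁ ≠ t₂ := fun h => hne <| by
    simpa [t₁, t₂, har] using (Finset.ext_iff.mp (congrArg Subtype.val h) a).mp
      (Finset.mem_insert_self a r)
  rw [Finset.sum_eq_add t₁ t₂ ht₁₂ ?others (absurd (Finset.mem_univ _))
    (absurd (Finset.mem_univ _))]
  case others =>
    intro t _ ht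
    refine hvanish t.1 fun ⟨hrt, hts⟩ => ?_
    rcases eq_insert_or_eq_insert_of_subset hab hrt hts (by rw [t.2.2, hr]) with h | h
    exacts [ht.1 (Subtype.ext h), ht.2 (Subtype.ext h)]
  have hs : s = insert a (insert b r) := by
    rw [← Finset.sdiff_union_of_subset hrs, hab, Finset.insert_union, Finset.singleton_union]
  rw [hs]
  exact csign_mul_csign_add_csign_mul_csign hne har hbr

lemma Blow_le_Zlow (hK : ∀ s ∈ K, ∀ t ⊆ s, t ∈ K) (k : ℕ) : Blow K (k + 1) ≤ Zlow K (k + 1) := by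
  rintro _ ⟨v, rfl⟩
  change kbnd K (k + 1) *ᵥ (kbnd K (k + 2) *ᵥ v) = 0
  ext r
  rw [Matrix.mulVec_mulVec, Matrix.mulVec, dotProduct, Pi.zero_apply]
  refine Finset.sum_eq_zero fun s _ => ?_
  simp only [Matrix.mul_apply, kbnd]
  exact mul_eq_zero_of_left (sum_csign_mul_csign K hK r.1 s.1 r.2.2 s.2) _

lemma intCast_csign_zmod_two (s r : Finset (Fin m)) :
    (csign s r : ZMod 2) = if r ⊆ s then ((s \ r).card : ZMod 2) else 0 := by
  unfold csign
  split_ifs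
  · push_cast
    simp [show (-1 : ZMod 2) = 1 from rfl]
  · exact Int.cast_zero

lemma even_sum_kbnd {k : ℕ}
    (hK : ∀ r ∈ K, r.card = k → Even (K.filter (fun s => r ⊆ s ∧ s.card = k + 1)).card)
    (r : {r : Finset (Fin m) // r ∈ K ∧ r.card = k + 1 - 1}) :
    Even (∑ s, kbnd K (k + 1) r s) := by
  have hterm : ∀ s ∈ K.filter (·.card = k + 1),
      (if r.1 ⊆ s then ((s \ r.1).card : ZMod 2) else 0) = if r.1 ⊆ s then 1 else 0 := by
    intro s hs
    split_ifs with hrs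
    · rw [Finset.card_sdiff_of_subset hrs, (Finset.mem_filter.mp hs).2, r.2.2,
        show k + 1 - (k + 1 - 1) = 1 by omega, Nat.cast_one]
    · rfl
  rw [← ZMod.intCast_eq_zero_iff_even]
  simp only [kbnd, Int.cast_sum, intCast_csign_zmod_two]
  rw [← Finset.sum_subtype (K.filter (·.card = k + 1)) (fun s => by simp)
      (fun s => if r.1 ⊆ s then ((s \ r.1).card : ZMod 2) else 0),
    Finset.sum_congr rfl hterm, Finset.sum_boole, Finset.filter_filter,
    ZMod.natCast_eq_zero_iff_even]
  simpa only [and_comm] using hK r.1 r.2.1 (by rw [r.2.2, Nat.add_sub_cancel])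

end Boundary

theorem stmt18_general {m : ℕ} (K : Finset (Finset (Fin m)))
    (hK : ∀ s ∈ K, ∀ t ⊆ s, t ∈ K)
    (hfacet : ∃ s ∈ K, s.card = 3)
    (hsurface : ∀ r ∈ K, r.card = 2 → (K.filter (fun s => r ⊆ s ∧ s.card = 3)).card = 2)
    (hH2 : LinearMap.ker (kbnd K (2 + 1)).mulVecLin = ⊥)
    (hH1 : Nonempty ((Hlow K 2) ≃ₗ[ℤ] ZMod 2)) :
    (∀ q : ℕ, 0 < q → kFlowCount K 2 q = if 2 ∣ q then 1 else 0) ∧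
    ¬ ∃ p : Polynomial ℚ, ∀ q : ℕ, 0 < q →
        (kFlowCount K 2 q : ℚ) = p.eval (q : ℚ) := by
  obtain ⟨e⟩ := hH1
  obtain ⟨s₀, hs₀⟩ := hfacet
  have : Nonempty {s : Finset (Fin m) // s ∈ K ∧ s.card = 2 + 1} := ⟨⟨s₀, hs₀⟩⟩
  have hflows : ∀ q : ℕ, 0 < q → kFlowCount K 2 q = if 2 ∣ q then 1 else 0 := by
    intro q hq
    have : NeZero q := ⟨hq.ne'⟩
    have hcycles : Nat.card (LinearMap.ker ((kbnd K (2 + 1)).map ((↑) : ℤ → ZMod q)).mulVecLin) =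
        if 2 ∣ q then 2 else 1 := calc
      _ = Nat.card (Submodule.torsionBy ℤ (_ ⧸ Blow K 2) (q : ℤ)) :=
        card_ker_map_intCast_eq_card_torsionBy _ hH2 q
      _ = Nat.card (Submodule.torsionBy ℤ (Hlow K 2) (q : ℤ)) :=
        (card_torsionBy_quotient_comap_ker _ (Blow_le_Zlow K hK 1) (by omega)).symm
      _ = _ := (card_torsionBy_of_linearEquiv e _).trans (card_torsionBy_zmod_two q)
    split_ifs at hcycles ⊢ with h2
    · obtain ⟨c, hc0, hcc⟩ := ZMod.exists_ne_zero_add_self_eq_zero hq h2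
      refine card_nowhereZero_eq_one _ hcycles (v := fun _ => c) ?_ fun _ => hc0
      exact Matrix.map_intCast_mulVec_const_eq_zero _
        (even_sum_kbnd K fun r hr hr2 => (hsurface r hr hr2).symm ▸ even_two) hcc
    · exact card_nowhereZero_eq_zero _ hcycles
  exact ⟨hflows, not_exists_polynomial_of_eq_ite_even _ hflows⟩

/-- Example 2.16: if `Δ` is a triangulation of `ℝP²` — i.e. a
`2`-dimensional simplicial complex, each of whose edges lies in exactly two triangles,
with `H₂(Δ; ℤ) = 0` and `H₁(Δ; ℤ) ≅ ℤ/2` — then the number of nowhere-zero modular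
`q`-flows is `1` for even `q` and `0` for odd `q`; in particular `Φ_Δ` is not a
polynomial in `q`. -/
theorem stmt18 {m : ℕ} (K : Finset (Finset (Fin m)))
    (hK : ∀ s ∈ K, ∀ t ⊆ s, t ∈ K)
    (hdim : ∀ s ∈ K, s.card ≤ 3)
    (hfacet : ∃ s ∈ K, s.card = 3)
    (hsurface : ∀ r ∈ K, r.card = 2 → (K.filter (fun s => r ⊆ s ∧ s.card = 3)).card = 2)
    (hH2 : LinearMap.ker (kbnd K (2 + 1)).mulVecLin = ⊥)
    (hH1 : Nonempty ((Hlow K 2) ≃ₗ[ℤ] ZMod 2)) :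
    (∀ q : ℕ, 0 < q → kFlowCount K 2 q = if 2 ∣ q then 1 else 0) ∧
    ¬ ∃ p : Polynomial ℚ, ∀ q : ℕ, 0 < q →
        (kFlowCount K 2 q : ℚ) = p.eval (q : ℚ) :=
  stmt18_general K hK hfacet hsurface hH2 hH1
end
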